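/- Let A and B be algebras and Q : A ⊗ B → A ⊗ B a linear map satisfying a_Q ⊗ 1_Q = a ⊗ 1, 1_Q ⊗ b_Q = 1 ⊗ b, (aa')_Q ⊗ b_Q = a_q a'_Q ⊗ b_{Q_q}, and a_Q ⊗ (bb')_Q = a_{Q_q} ⊗ b_Q b'_q. Then the multiplication (a ⊗ b)(a' ⊗ b') = a_Q a' ⊗ b b'_Q defines an associative unital algebra structure on A ⊗ B with unit 1 ⊗ 1, denoted A _Q⊗ B. -/
import Mathlib

set_option maxHeartbeats 1000000
set_option synthInstance.maxHeartbeats 400000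


open TensorProduct

noncomputable section

namespace LR

variable {k : Type*} [Field k]

section Toolbox

variable {X Y Z W X' Y' : Type*}
  [AddCommMonoid X] [Module k X] [AddCommMonoid Y] [Module k Y]
  [AddCommMonoid Z] [Module k Z] [AddCommMonoid W] [Module k W]
  [AddCommMonoid X'] [Module k X'] [AddCommMonoid Y'] [Module k Y']

/-- Expand the first tensor factor using `f : X →ₗ X' ⊗ Y'`. -/
def expand (f : X →ₗ[k] X' ⊗[k] Y') : X ⊗[k] Z →ₗ[k] X' ⊗[k] (Y' ⊗[k] Z) :=
  (TensorProduct.assoc k X' Y' Z).toLinearMap ∘ₗ (TensorProduct.map f LinearMap.id)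

/-- Apply `f` to the first two factors of a right-nested triple tensor. -/
def app2 (f : X ⊗[k] Y →ₗ[k] X' ⊗[k] Y') :
    X ⊗[k] (Y ⊗[k] Z) →ₗ[k] X' ⊗[k] (Y' ⊗[k] Z) :=
  (TensorProduct.assoc k X' Y' Z).toLinearMap ∘ₗ (TensorProduct.map f LinearMap.id)
    ∘ₗ (TensorProduct.assoc k X Y Z).symm.toLinearMap

/-- Contract the first two factors of a right-nested triple tensor with `m`. -/
def con2 (m : X ⊗[k] Y →ₗ[k] W) : X ⊗[k] (Y ⊗[k] Z) →ₗ[k] W ⊗[k] Z :=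
  (TensorProduct.map m LinearMap.id) ∘ₗ (TensorProduct.assoc k X Y Z).symm.toLinearMap

/-- Swap the first two factors of a right-nested triple tensor. -/
def swL : X ⊗[k] (Y ⊗[k] Z) →ₗ[k] Y ⊗[k] (X ⊗[k] Z) :=
  (TensorProduct.assoc k Y X Z).toLinearMap
    ∘ₗ (TensorProduct.map (TensorProduct.comm k X Y).toLinearMap LinearMap.id)
    ∘ₗ (TensorProduct.assoc k X Y Z).symm.toLinearMap

/-- Exchange the second and third factors of `(X ⊗ Y) ⊗ Z`. -/
def ex23 : (X ⊗[k] Y) ⊗[k] Z →ₗ[k] (X ⊗[k] Z) ⊗[k] Y :=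
  (TensorProduct.assoc k X Z Y).symm.toLinearMap
    ∘ₗ (TensorProduct.map LinearMap.id (TensorProduct.comm k Y Z).toLinearMap)
    ∘ₗ (TensorProduct.assoc k X Y Z).toLinearMap

/-- The componentwise multiplication on a tensor product of two
(not necessarily unital) multiplications. -/
def tensMul (m₁ : X ⊗[k] X →ₗ[k] X) (m₂ : Y ⊗[k] Y →ₗ[k] Y) :
    (X ⊗[k] Y) ⊗[k] (X ⊗[k] Y) →ₗ[k] X ⊗[k] Y :=
  (TensorProduct.map m₁ m₂) ∘ₗ (tensorTensorTensorComm k X Y X Y).toLinearMap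

end Toolbox

section LRPair

variable {A B : Type*} [AddCommMonoid A] [Module k A] [AddCommMonoid B] [Module k B]

/-- `x ⊗ y ↦ Σ x·a'_S ⊗ y_S` where `S(y ⊗ a') = a'_S ⊗ y_S`. -/
def rext (mA : A ⊗[k] A →ₗ[k] A) (S : B ⊗[k] A →ₗ[k] A ⊗[k] B) (a' : A) :
    A ⊗[k] B →ₗ[k] A ⊗[k] B :=
  (TensorProduct.map mA LinearMap.id)
    ∘ₗ (TensorProduct.assoc k A A B).symm.toLinearMap
    ∘ₗ (TensorProduct.map LinearMap.id (S ∘ₗ (TensorProduct.mk k B A).flip a'))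

/-- `x ⊗ y ↦ Σ x_S ⊗ b_S · y` where `S(b ⊗ x) = x_S ⊗ b_S`. -/
def lext (mB : B ⊗[k] B →ₗ[k] B) (S : B ⊗[k] A →ₗ[k] A ⊗[k] B) (b : B) :
    A ⊗[k] B →ₗ[k] A ⊗[k] B :=
  (TensorProduct.map LinearMap.id mB)
    ∘ₗ (TensorProduct.assoc k A B B).toLinearMap
    ∘ₗ (TensorProduct.map (S ∘ₗ (TensorProduct.mk k B A) b) LinearMap.id)

/-- `x ⊗ y ↦ Σ a_S · x ⊗ y_S` where `S(a ⊗ y) = a_S ⊗ y_S`. -/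
def qlext (mA : A ⊗[k] A →ₗ[k] A) (S : A ⊗[k] B →ₗ[k] A ⊗[k] B) (a : A) :
    A ⊗[k] B →ₗ[k] A ⊗[k] B :=
  (TensorProduct.map (mA ∘ₗ (TensorProduct.comm k A A).toLinearMap) LinearMap.id)
    ∘ₗ (TensorProduct.assoc k A A B).symm.toLinearMap
    ∘ₗ (TensorProduct.map LinearMap.id (S ∘ₗ (TensorProduct.mk k A B) a))

/-- `x ⊗ y ↦ Σ x_S ⊗ y · b'_S` where `S(x ⊗ b') = x_S ⊗ b'_S`. -/
def qrext (mB : B ⊗[k] B →ₗ[k] B) (S : A ⊗[k] B →ₗ[k] A ⊗[k] B) (b' : B) :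
    A ⊗[k] B →ₗ[k] A ⊗[k] B :=
  (TensorProduct.map LinearMap.id (mB ∘ₗ (TensorProduct.comm k B B).toLinearMap))
    ∘ₗ (TensorProduct.assoc k A B B).toLinearMap
    ∘ₗ (TensorProduct.map (S ∘ₗ (TensorProduct.mk k A B).flip b') LinearMap.id)

/-- `x ⊗ y ↦ Σ y ⊗ S(x ⊗ b')`. -/
def swQ (S : A ⊗[k] B →ₗ[k] A ⊗[k] B) (b' : B) :
    A ⊗[k] B →ₗ[k] B ⊗[k] (A ⊗[k] B) :=
  (TensorProduct.map LinearMap.id S)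
    ∘ₗ (TensorProduct.map LinearMap.id ((TensorProduct.mk k A B).flip b'))
    ∘ₗ (TensorProduct.comm k A B).toLinearMap

/-- `x ⊗ y ↦ Σ v ⊗ (u ⊗ y)` where `S(b ⊗ x) = u ⊗ v`. -/
def swR (S : B ⊗[k] A →ₗ[k] A ⊗[k] B) (b : B) :
    A ⊗[k] B →ₗ[k] B ⊗[k] (A ⊗[k] B) :=
  (TensorProduct.assoc k B A B).toLinearMap
    ∘ₗ (TensorProduct.map (TensorProduct.comm k A B).toLinearMap LinearMap.id)
    ∘ₗ (TensorProduct.map (S ∘ₗ (TensorProduct.mk k B A) b) LinearMap.id)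

/-- `x ⊗ y ↦ Σ x ⊗ (v ⊗ u)` where `S(a' ⊗ y) = u ⊗ v`. -/
def swQ2 (S : A ⊗[k] B →ₗ[k] A ⊗[k] B) (a' : A) :
    A ⊗[k] B →ₗ[k] A ⊗[k] (B ⊗[k] A) :=
  TensorProduct.map LinearMap.id
    ((TensorProduct.comm k A B).toLinearMap ∘ₗ S ∘ₗ (TensorProduct.mk k A B) a')

/-- `x ⊗ y ↦ Σ u ⊗ (v ⊗ x)` where `S(y ⊗ a) = u ⊗ v`. -/
def swR2 (S : B ⊗[k] A →ₗ[k] A ⊗[k] B) (a : A) :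
    A ⊗[k] B →ₗ[k] A ⊗[k] (B ⊗[k] A) :=
  (TensorProduct.assoc k A B A).toLinearMap
    ∘ₗ (TensorProduct.map (S ∘ₗ (TensorProduct.mk k B A).flip a) LinearMap.id)
    ∘ₗ (TensorProduct.comm k A B).toLinearMap

/-- `(a ⊗ b) ⊗ (a' ⊗ b') ↦ (a ⊗ b') ⊗ (b ⊗ a')`. -/
def lrRearr : (A ⊗[k] B) ⊗[k] (A ⊗[k] B) →ₗ[k] (A ⊗[k] B) ⊗[k] (B ⊗[k] A) :=
  (tensorTensorTensorComm k A B B A).toLinearMap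
    ∘ₗ (TensorProduct.map LinearMap.id (TensorProduct.comm k A B).toLinearMap)

/-- The multiplication of the L-R-twisted tensor product:
`(a ⊗ b)(a' ⊗ b') = a_Q a'_R ⊗ b_R b'_Q`. -/
def lrMulGen (mA : A ⊗[k] A →ₗ[k] A) (mB : B ⊗[k] B →ₗ[k] B)
    (Q : A ⊗[k] B →ₗ[k] A ⊗[k] B) (R : B ⊗[k] A →ₗ[k] A ⊗[k] B) :
    (A ⊗[k] B) ⊗[k] (A ⊗[k] B) →ₗ[k] A ⊗[k] B :=
  (TensorProduct.map mA (mB ∘ₗ (TensorProduct.comm k B B).toLinearMap))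
    ∘ₗ (tensorTensorTensorComm k A B A B).toLinearMap
    ∘ₗ (TensorProduct.map Q R) ∘ₗ lrRearr

/-- `R : B ⊗ A → A ⊗ B` is a twisting map (w.r.t. the given multiplications
and units). -/
def IsTwistingMap (mA : A ⊗[k] A →ₗ[k] A) (mB : B ⊗[k] B →ₗ[k] B)
    (oneA : A) (oneB : B) (R : B ⊗[k] A →ₗ[k] A ⊗[k] B) : Prop :=
  (∀ a : A, R (oneB ⊗ₜ a) = a ⊗ₜ oneB) ∧
  (∀ b : B, R (b ⊗ₜ oneA) = oneA ⊗ₜ b) ∧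
  (∀ (a a' : A) (b : B), R (b ⊗ₜ mA (a ⊗ₜ a')) = rext mA R a' (R (b ⊗ₜ a))) ∧
  (∀ (a : A) (b b' : B), R (mB (b ⊗ₜ b') ⊗ₜ a) = lext mB R b (R (b' ⊗ₜ a)))

/-- The axioms of an L-R-twisted tensor product `A _Q⊗_R B`. -/
def IsLRPair (mA : A ⊗[k] A →ₗ[k] A) (mB : B ⊗[k] B →ₗ[k] B)
    (oneA : A) (oneB : B)
    (Q : A ⊗[k] B →ₗ[k] A ⊗[k] B) (R : B ⊗[k] A →ₗ[k] A ⊗[k] B) : Prop :=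
  IsTwistingMap mA mB oneA oneB R ∧
  (∀ a : A, Q (a ⊗ₜ oneB) = a ⊗ₜ oneB) ∧
  (∀ b : B, Q (oneA ⊗ₜ b) = oneA ⊗ₜ b) ∧
  (∀ (a a' : A) (b : B), Q (mA (a ⊗ₜ a') ⊗ₜ b) = qlext mA Q a (Q (a' ⊗ₜ b))) ∧
  (∀ (a : A) (b b' : B), Q (a ⊗ₜ mB (b ⊗ₜ b')) = qrext mB Q b' (Q (a ⊗ₜ b))) ∧
  (∀ (a : A) (b b' : B), swQ Q b' (R (b ⊗ₜ a)) = swR R b (Q (a ⊗ₜ b'))) ∧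
  (∀ (a a' : A) (b : B), swQ2 Q a' (R (b ⊗ₜ a)) = swR2 R a (Q (a' ⊗ₜ b)))

end LRPair

end LR

namespace LR


section AuxProof

variable {k : Type*} [Field k] {A B : Type*}
  [Ring A] [Algebra k A] [Ring B] [Algebra k B]

/-- Abbreviation for the multiplication with `R` the flip. -/
private def mu (Q : A ⊗[k] B →ₗ[k] A ⊗[k] B) :
    (A ⊗[k] B) ⊗[k] (A ⊗[k] B) →ₗ[k] A ⊗[k] B :=
  lrMulGen (LinearMap.mul' k A) (LinearMap.mul' k B) Q
    (TensorProduct.comm k B A).toLinearMap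

private lemma mu_tmul (Q : A ⊗[k] B →ₗ[k] A ⊗[k] B) (a a' : A) (b b' : B) :
    mu Q ((a ⊗ₜ b) ⊗ₜ (a' ⊗ₜ b')) =
      TensorProduct.map (LinearMap.mulRight k a') (LinearMap.mulLeft k b)
        (Q (a ⊗ₜ b')) := by
  have tail : ∀ t : A ⊗[k] B,
      (TensorProduct.map (LinearMap.mul' k A)
        ((LinearMap.mul' k B) ∘ₗ (TensorProduct.comm k B B).toLinearMap))
        ((tensorTensorTensorComm k A B A B) (t ⊗ₜ (a' ⊗ₜ b))) =
      TensorProduct.map (LinearMap.mulRight k a') (LinearMap.mulLeft k b) t := by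
    intro t
    induction t using TensorProduct.induction_on with
    | zero => simp only [tmul_zero, zero_tmul, map_zero, LinearEquiv.map_zero]
    | tmul u v => simp [LinearMap.mul'_apply]
    | add s t hs ht => simp only [tmul_add, add_tmul, map_add, LinearEquiv.map_add, hs, ht]
  simp only [mu, lrMulGen, lrRearr, LinearMap.comp_apply, LinearEquiv.coe_coe,
    TensorProduct.map_tmul, tensorTensorTensorComm_tmul, TensorProduct.comm_tmul,
    LinearMap.id_coe, id_eq]
  exact tail _


private lemma qlext_apply (Q : A ⊗[k] B →ₗ[k] A ⊗[k] B) (u p : A) (q : B) :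
    qlext (LinearMap.mul' k A) Q u (p ⊗ₜ q) =
      TensorProduct.map (LinearMap.mulRight k p) LinearMap.id (Q (u ⊗ₜ q)) := by
  simp only [qlext, LinearMap.comp_apply, TensorProduct.map_tmul, LinearMap.id_coe, id_eq,
    TensorProduct.mk_apply]
  generalize Q (u ⊗ₜ[k] q) = t
  induction t using TensorProduct.induction_on with
  | zero => simp only [tmul_zero, zero_tmul, map_zero, LinearEquiv.map_zero]
  | tmul c d => simp [LinearMap.mul'_apply]
  | add s t hs ht => simp only [tmul_add, add_tmul, map_add, LinearEquiv.map_add, hs, ht]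

private lemma qrext_apply (Q : A ⊗[k] B →ₗ[k] A ⊗[k] B) (u : A) (v q : B) :
    qrext (LinearMap.mul' k B) Q q (u ⊗ₜ v) =
      TensorProduct.map LinearMap.id (LinearMap.mulLeft k v) (Q (u ⊗ₜ q)) := by
  simp only [qrext, LinearMap.comp_apply, TensorProduct.map_tmul, LinearMap.id_coe, id_eq,
    LinearMap.flip_apply, TensorProduct.mk_apply]
  generalize Q (u ⊗ₜ[k] q) = t
  induction t using TensorProduct.induction_on with
  | zero => simp only [tmul_zero, zero_tmul, map_zero, LinearEquiv.map_zero]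
  | tmul c d => simp [LinearMap.mul'_apply]
  | add s t hs ht => simp only [tmul_add, add_tmul, map_add, LinearEquiv.map_add, hs, ht]

/-- The common value of both sides of associativity, as a bilinear expression
in `Q (a ⊗ b')` and `Q (a' ⊗ b'')`. -/
private def G (Q : A ⊗[k] B →ₗ[k] A ⊗[k] B) (a'' : A) (b : B) :
    (A ⊗[k] B) ⊗[k] (A ⊗[k] B) →ₗ[k] A ⊗[k] B :=
  TensorProduct.map ((LinearMap.mulRight k a'') ∘ₗ LinearMap.mul' k A)
      ((LinearMap.mulLeft k b) ∘ₗ LinearMap.mul' k B ∘ₗ (TensorProduct.comm k B B).toLinearMap)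
    ∘ₗ (tensorTensorTensorComm k A B A B).toLinearMap
    ∘ₗ TensorProduct.map Q (TensorProduct.comm k B A).toLinearMap
    ∘ₗ lrRearr

private lemma G_tmul (Q : A ⊗[k] B →ₗ[k] A ⊗[k] B) (a'' : A) (b : B)
    (u p : A) (v q : B) :
    G Q a'' b ((u ⊗ₜ v) ⊗ₜ (p ⊗ₜ q)) =
      TensorProduct.map ((LinearMap.mulRight k a'') ∘ₗ (LinearMap.mulRight k p))
        ((LinearMap.mulLeft k b) ∘ₗ (LinearMap.mulLeft k v)) (Q (u ⊗ₜ q)) := by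
  simp only [G, lrRearr, LinearMap.comp_apply, LinearEquiv.coe_coe,
    tensorTensorTensorComm_tmul, TensorProduct.map_tmul, TensorProduct.comm_tmul,
    LinearMap.id_coe, id_eq]
  generalize Q (u ⊗ₜ[k] q) = t
  induction t using TensorProduct.induction_on with
  | zero => simp only [tmul_zero, zero_tmul, map_zero, LinearEquiv.map_zero]
  | tmul c d => simp [LinearMap.mul'_apply, mul_assoc]
  | add s t hs ht => simp only [tmul_add, add_tmul, map_add, LinearEquiv.map_add, hs, ht]

private lemma assocL (Q : A ⊗[k] B →ₗ[k] A ⊗[k] B)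
    (h3 : ∀ (a a' : A) (b : B),
      Q ((a * a') ⊗ₜ b) = qlext (LinearMap.mul' k A) Q a (Q (a' ⊗ₜ b)))
    (a a' a'' : A) (b b' b'' : B) :
    mu Q (mu Q ((a ⊗ₜ b) ⊗ₜ (a' ⊗ₜ b')) ⊗ₜ (a'' ⊗ₜ b'')) =
      G Q a'' b (Q (a ⊗ₜ b') ⊗ₜ Q (a' ⊗ₜ b'')) := by
  rw [mu_tmul]
  generalize Q (a ⊗ₜ b') = T
  induction T using TensorProduct.induction_on with
  | zero => simp only [tmul_zero, zero_tmul, map_zero, LinearEquiv.map_zero]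
  | tmul u v =>
    rw [TensorProduct.map_tmul, LinearMap.mulRight_apply, LinearMap.mulLeft_apply,
      mu_tmul, h3 u a' b'']
    generalize Q (a' ⊗ₜ b'') = P
    induction P using TensorProduct.induction_on with
    | zero => simp only [tmul_zero, zero_tmul, map_zero, LinearEquiv.map_zero]
    | tmul p q =>
      rw [qlext_apply, G_tmul, ← LinearMap.comp_apply, ← TensorProduct.map_comp]
      congr 1
      · rw [LinearMap.comp_id, LinearMap.mulLeft_mul]
    | add s t hs ht => simp only [tmul_add, add_tmul, map_add, LinearEquiv.map_add, hs, ht]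
  | add s t hs ht =>
    rw [map_add, add_tmul, map_add, add_tmul, map_add, hs, ht]

private lemma assocR (Q : A ⊗[k] B →ₗ[k] A ⊗[k] B)
    (h4 : ∀ (a : A) (b b' : B),
      Q (a ⊗ₜ (b * b')) = qrext (LinearMap.mul' k B) Q b' (Q (a ⊗ₜ b)))
    (a a' a'' : A) (b b' b'' : B) :
    mu Q ((a ⊗ₜ b) ⊗ₜ mu Q ((a' ⊗ₜ b') ⊗ₜ (a'' ⊗ₜ b''))) =
      G Q a'' b (Q (a ⊗ₜ b') ⊗ₜ Q (a' ⊗ₜ b'')) := by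
  rw [mu_tmul (Q := Q) a' a'' b' b'']
  generalize Q (a' ⊗ₜ b'') = P
  induction P using TensorProduct.induction_on with
  | zero => simp only [tmul_zero, zero_tmul, map_zero, LinearEquiv.map_zero]
  | tmul p q =>
    rw [TensorProduct.map_tmul, LinearMap.mulRight_apply, LinearMap.mulLeft_apply,
      mu_tmul, h4 a b' q]
    generalize Q (a ⊗ₜ b') = T
    induction T using TensorProduct.induction_on with
    | zero => simp only [tmul_zero, zero_tmul, map_zero, LinearEquiv.map_zero]
    | tmul u v =>
      rw [qrext_apply, G_tmul, ← LinearMap.comp_apply, ← TensorProduct.map_comp]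
      congr 1
      · rw [LinearMap.comp_id, LinearMap.mulRight_mul]
    | add s t hs ht => simp only [tmul_add, add_tmul, map_add, LinearEquiv.map_add, hs, ht]
  | add s t hs ht =>
    rw [map_add, tmul_add, map_add, tmul_add, map_add, hs, ht]

end AuxProof

/-- If `Q : A ⊗ B → A ⊗ B` satisfies the four conditions, then
`(a ⊗ b)(a' ⊗ b') = a_Q a' ⊗ b b'_Q` is an associative unital algebra structure
on `A ⊗ B` with unit `1 ⊗ 1` (the L-R-twisted tensor product with `R` the flip). -/
theorem lr_smash_type_product_is_algebra
    {k : Type*} [Field k] {A B : Type*}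
    [Ring A] [Algebra k A] [Ring B] [Algebra k B]
    (Q : A ⊗[k] B →ₗ[k] A ⊗[k] B)
    (h1 : ∀ a : A, Q (a ⊗ₜ (1 : B)) = a ⊗ₜ (1 : B))
    (h2 : ∀ b : B, Q ((1 : A) ⊗ₜ b) = (1 : A) ⊗ₜ b)
    (h3 : ∀ (a a' : A) (b : B),
      Q ((a * a') ⊗ₜ b) = qlext (LinearMap.mul' k A) Q a (Q (a' ⊗ₜ b)))
    (h4 : ∀ (a : A) (b b' : B),
      Q (a ⊗ₜ (b * b')) = qrext (LinearMap.mul' k B) Q b' (Q (a ⊗ₜ b))) :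
    (∀ x : A ⊗[k] B,
      lrMulGen (LinearMap.mul' k A) (LinearMap.mul' k B) Q
        (TensorProduct.comm k B A).toLinearMap (((1 : A) ⊗ₜ[k] (1 : B)) ⊗ₜ[k] x) = x) ∧
    (∀ x : A ⊗[k] B,
      lrMulGen (LinearMap.mul' k A) (LinearMap.mul' k B) Q
        (TensorProduct.comm k B A).toLinearMap (x ⊗ₜ[k] ((1 : A) ⊗ₜ[k] (1 : B))) = x) ∧
    (∀ x y z : A ⊗[k] B,
      lrMulGen (LinearMap.mul' k A) (LinearMap.mul' k B) Q
          (TensorProduct.comm k B A).toLinearMap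
        ((lrMulGen (LinearMap.mul' k A) (LinearMap.mul' k B) Q
          (TensorProduct.comm k B A).toLinearMap (x ⊗ₜ[k] y)) ⊗ₜ[k] z) =
      lrMulGen (LinearMap.mul' k A) (LinearMap.mul' k B) Q
          (TensorProduct.comm k B A).toLinearMap
        (x ⊗ₜ[k] (lrMulGen (LinearMap.mul' k A) (LinearMap.mul' k B) Q
          (TensorProduct.comm k B A).toLinearMap (y ⊗ₜ[k] z)))) := by
  have hmu : lrMulGen (LinearMap.mul' k A) (LinearMap.mul' k B) Q
      (TensorProduct.comm k B A).toLinearMap = mu Q := rfl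
  rw [hmu]
  refine ⟨?_, ?_, ?_⟩
  · intro x
    induction x using TensorProduct.induction_on with
    | zero => simp only [tmul_zero, map_zero]
    | tmul a' b' =>
      rw [mu_tmul, h2, TensorProduct.map_tmul, LinearMap.mulRight_apply,
        LinearMap.mulLeft_apply, one_mul, one_mul]
    | add s t hs ht => simp only [tmul_add, map_add, hs, ht]
  · intro x
    induction x using TensorProduct.induction_on with
    | zero => simp only [zero_tmul, map_zero]
    | tmul a b =>
      rw [mu_tmul, h1, TensorProduct.map_tmul, LinearMap.mulRight_apply,
        LinearMap.mulLeft_apply, mul_one, mul_one]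
    | add s t hs ht => simp only [add_tmul, map_add, hs, ht]
  · intro x y z
    induction x using TensorProduct.induction_on with
    | zero => simp only [zero_tmul, map_zero, tmul_zero]
    | tmul a b =>
      induction y using TensorProduct.induction_on with
      | zero => simp only [zero_tmul, tmul_zero, map_zero]
      | tmul a' b' =>
        induction z using TensorProduct.induction_on with
        | zero => simp only [tmul_zero, map_zero]
        | tmul a'' b'' => rw [assocL Q h3, assocR Q h4]
        | add s t hs ht => simp only [tmul_add, map_add, hs, ht]
      | add s t hs ht => simp only [tmul_add, add_tmul, map_add, hs, ht]
    | add s t hs ht => simp only [tmul_add, add_tmul, map_add, hs, ht]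


end LR
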